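/- For every positive integer $d$ and every real $x$, $-0.4 - \frac{0.61}{d} < \frac{1}{d}\sum_{k=1}^d \cos(2kx) \le 1$. -/
import Mathlib

open Finset Real

/-- `sin u ≥ -0.23 u` for `u ≥ 0`. -/
lemma sin_ge_neg_mul (u : ℝ) (hu : 0 ≤ u) : -0.23 * u ≤ Real.sin u := by
  rcases le_or_gt u π with h | h
  · nlinarith [Real.sin_nonneg_of_nonneg_of_le_pi hu h]
  rcases le_or_gt 4.35 u with h2 | h2
  · nlinarith [Real.neg_one_le_sin u]
  -- π < u < 4.35 ; sin u = -sin (u - π)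
  have hsin : Real.sin u = -Real.sin (u - π) := by
    rw [← Real.sin_pi_sub, ← Real.sin_neg, neg_sub]
  have hpi1 : (3.14 : ℝ) < π := by
    have := Real.pi_gt_d2; norm_num at this ⊢; linarith
  have hpi2 : π < 3.15 := by
    have := Real.pi_lt_d2; norm_num at this ⊢; linarith
  set v := u - π with hv
  have hv0 : 0 < v := by simp [hv]; linarith
  -- need sin v ≤ 0.23 * (v + π)
  rcases le_or_gt v 0.9379 with h3 | h3
  · have := Real.sin_le hv0.le
    rw [hsin]; nlinarith
  · -- use cos bound with w = v - π/2 ∈ [-0.64, -0.36]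
    have hw1 : v - π/2 ≤ -0.36 := by linarith
    have hw2 : -0.64 ≤ v - π/2 := by linarith
    have hcos : Real.sin v = Real.cos (v - π/2) := by
      rw [Real.cos_sub_pi_div_two]
    have habs : |v - π/2| ≤ 1 := by rw [abs_le]; constructor <;> linarith
    have hb := Real.cos_bound habs
    rw [abs_le] at hb
    set w := v - π/2 with hwdef
    have hsq : w^2 ≤ 0.4096 := by nlinarith
    have hw4 : w^4 ≤ 0.17 := by nlinarith [sq_nonneg w, sq_nonneg (w^2)]
    rw [hsin, hcos]
    have key : Real.cos w ≤ 1 - w^2/2 + |w|^4 * (5/96) := by linarith [hb.2]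
    have habs4 : |w|^4 = w^4 := by rw [← abs_pow, abs_of_nonneg]; positivity
    rw [habs4] at key
    nlinarith [sq_nonneg (w + 0.23)]

/-- Dirichlet-kernel identity. -/
lemma sum_cos_eq (d : ℕ) (t : ℝ) :
    2 * Real.sin (t/2) * ∑ k ∈ Finset.Icc 1 d, Real.cos (k * t)
      = Real.sin ((d + 1/2) * t) - Real.sin (t/2) := by
  induction d with
  | zero => simp; ring_nf
  | succ n ih =>
    rw [Finset.sum_Icc_succ_top (by omega : 1 ≤ n + 1)]
    have h := Real.sin_sub_sin ((n + 1 + 1/2) * t) ((n + 1/2) * t)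
    have e1 : ((n + 1 + 1/2) * t - (n + 1/2) * t) / 2 = t / 2 := by ring
    have e2 : ((n + 1 + 1/2) * t + (n + 1/2) * t) / 2 = (n+1) * t := by ring
    rw [e1, e2] at h
    push_cast
    nlinarith [ih, h]

lemma key_lower (d : ℕ) (hd : 2 ≤ d) (t : ℝ) (ht0 : 0 < t) (htpi : t ≤ π) :
    -0.4 * d - 0.61 < ∑ k ∈ Finset.Icc 1 d, Real.cos (k * t) := by
  have hpi2 : π < 3.15 := by
    have := Real.pi_lt_d2; norm_num at this ⊢; linarith
  have hpi1 : (3.14:ℝ) < π := by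
    have := Real.pi_gt_d2; norm_num at this ⊢; linarith
  set s := Real.sin (t/2) with hsdef
  have hs : 0 < s := Real.sin_pos_of_pos_of_lt_pi (by linarith) (by linarith)
  have hjordan : 2/π * (t/2) ≤ s := Real.mul_le_sin (by linarith) (by linarith)
  have hts : t ≤ π * s := by
    have hπ : (0:ℝ) < π := by linarith
    rw [div_mul_eq_mul_div, div_le_iff₀ hπ] at hjordan
    nlinarith
  set S := ∑ k ∈ Finset.Icc 1 d, Real.cos (k * t) with hS
  have hid : 2 * s * S = Real.sin ((d + 1/2) * t) - s := sum_cos_eq d t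
  have hu : (0:ℝ) ≤ (d + 1/2) * t := by positivity
  have hsin := sin_ge_neg_mul _ hu
  have hdR : (2:ℝ) ≤ (d:ℝ) := by exact_mod_cast hd
  -- sin u ≥ -0.23 (d+1/2) t ≥ -0.23 (d+1/2) π s
  have h1 : -0.23 * (((d:ℝ) + 1/2) * (π * s)) ≤ Real.sin ((d + 1/2) * t) := by
    nlinarith [mul_le_mul_of_nonneg_left hts (by positivity : (0:ℝ) ≤ (d:ℝ) + 1/2)]
  have h2 : -0.23 * (((d:ℝ) + 1/2) * (3.15 * s)) ≤ -0.23 * (((d:ℝ) + 1/2) * (π * s)) := by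
    nlinarith [mul_nonneg (mul_nonneg (by linarith : (0:ℝ) ≤ (d:ℝ) + 1/2) (by linarith : (0:ℝ) ≤ 3.15 - π)) hs.le]
  have h3 : (-0.8 * (d:ℝ) - 1.22) * s < -0.23 * (((d:ℝ) + 1/2) * (3.15 * s)) - s := by
    have hc : (0:ℝ) < (0.0755 * (d:ℝ) - 0.14225) := by linarith
    nlinarith [mul_pos hc hs]
  have h4 : (-0.8 * (d:ℝ) - 1.22) * s < 2 * s * S := by linarith
  nlinarith [h4, hs, mul_pos hs hs]

/-- for every positive integer `d` and real `x`,
`-0.4 - 0.61/d < (1/d) ∑_{k=1}^d cos(2kx) ≤ 1`. -/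
theorem cos_sum_bounds (d : ℕ) (hd : 0 < d) (x : ℝ) :
    (-0.4 : ℝ) - 0.61 / d < (1 / d) * ∑ k ∈ Finset.Icc 1 d, Real.cos (2 * k * x) ∧
      (1 / d) * ∑ k ∈ Finset.Icc 1 d, Real.cos (2 * k * x) ≤ 1 := by
  have hd' : (0:ℝ) < d := by exact_mod_cast hd
  set S := ∑ k ∈ Finset.Icc 1 d, Real.cos (2 * k * x) with hSdef
  have hupper : S ≤ d := by
    calc S ≤ ∑ k ∈ Finset.Icc 1 d, 1 :=
          Finset.sum_le_sum (fun k _ => Real.cos_le_one _)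
      _ = d := by simp
  have hlower : -0.4 * d - 0.61 < S := by
    rcases Nat.lt_or_ge d 2 with h2 | h2
    · have hd1 : d = 1 := by omega
      subst hd1
      have : S = Real.cos (2 * (1:ℕ) * x) := by rw [hSdef]; simp
      rw [this]
      push_cast
      norm_num
      linarith [Real.neg_one_le_cos (2*x)]
    · set m := round (x / π) with hm
      set t0 := 2*x - 2*π*m with ht0def
      have hπ : (0:ℝ) < π := Real.pi_pos
      have ht0 : |t0| ≤ π := by
        have h := abs_sub_round (x/π)
        have e : t0 = 2*π*(x/π - m) := by field_simp [ht0def]; ring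
        rw [e, abs_mul, abs_of_pos (by linarith : (0:ℝ) < 2*π)]
        nlinarith [abs_nonneg (x/π - (m:ℝ))]
      have hsum : S = ∑ k ∈ Finset.Icc 1 d, Real.cos (k * |t0|) := by
        refine Finset.sum_congr rfl (fun k _ => ?_)
        have h1 := Real.cos_add_int_mul_two_pi ((k:ℝ)*t0) ((k:ℤ)*m)
        push_cast at h1
        have e : 2*(k:ℝ)*x = (k:ℝ)*t0 + (k:ℝ)*(m:ℝ)*(2*π) := by rw [ht0def]; ring
        rw [e, h1, ← Real.cos_abs ((k:ℝ)*t0), abs_mul, Nat.abs_cast]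
      rcases (abs_nonneg t0).lt_or_eq with hpos | hzero
      · rw [hsum]
        exact key_lower d h2 |t0| hpos ht0
      · rw [hsum, ← hzero]
        simp
        linarith
  constructor
  · rw [one_div, inv_mul_eq_div, lt_div_iff₀ hd']
    have h061 : 0.61/(d:ℝ)*(d:ℝ) = 0.61 := div_mul_cancel₀ _ (ne_of_gt hd')
    nlinarith
  · rw [one_div, inv_mul_eq_div, div_le_one hd']
    exact hupper
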